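/- If R is a (1,β)-BM relation and r = [aba'b'] ∈ R, then replacing r by the two squares [a b_{β+1} a' b'] and [a b a' b_{β+1}⁻¹] yields a (1,β+1)-BM relation; similarly replacing r by [a b_{β+1}⁻¹ a' b'] and [a b a' b_{β+1}] yields a (1,β+1)-BM relation. -/

import Mathlib

open Set

/-- Signed letters: letter index together with a sign (`true` = positive). -/
abbrev V (n : ℕ) := Fin n × Bool

/-- Formal inversion of a signed letter. -/
def iv {n : ℕ} (x : V n) : V n := (x.1, !x.2)

/-- Oriented squares: tuples (a, b, a', b'). -/
abbrev Tup (α β : ℕ) := V α × V β × V α × V β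

/-- The geometric square [aba'b'], as the set of its four representatives. -/
def square {α β : ℕ} (a : V α) (b : V β) (a' : V α) (b' : V β) : Set (Tup α β) :=
  {(a, b, a', b'), (a', b', a, b), (iv a, iv b', iv a', iv b), (iv a', iv b, iv a, iv b')}

/-- The link of a set of geometric squares: the set of (horizontal, vertical)
edges contributed by the corners of the squares. -/
def link {α β : ℕ} (R : Set (Set (Tup α β))) : Set (V α × V β) :=
  {e | ∃ q ∈ R, ∃ t ∈ q, e = (iv t.1, t.2.1)}

/-- An (α,β)-BM relation: a set of α·β geometric squares whose link is the
complete bipartite graph K_{2α,2β}. -/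
def IsBM (α β : ℕ) (R : Set (Set (Tup α β))) : Prop :=
  (∀ q ∈ R, ∃ a b a' b', q = square a b a' b') ∧
  R.ncard = α * β ∧ link R = Set.univ

/-- Embedding of old vertical letters into the enlarged alphabet. -/
def up {β : ℕ} (b : V β) : V (β + 1) := (b.1.castSucc, b.2)

/-- The new vertical letter b_{β+1}. -/
def bn (β : ℕ) : V (β + 1) := (Fin.last β, true)

/-- Embedding of tuples along `up`. -/
def upT {α β : ℕ} (t : Tup α β) : Tup α (β + 1) :=
  (t.1, up t.2.1, t.2.2.1, up t.2.2.2)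

/-- Embedding of a geometric square into the enlarged alphabet. -/
def upSq {α β : ℕ} (q : Set (Tup α β)) : Set (Tup α (β + 1)) := upT '' q

/-- Embedding of a set of geometric squares into the enlarged alphabet. -/
def upR {α β : ℕ} (R : Set (Set (Tup α β))) : Set (Set (Tup α (β + 1))) := upSq '' R

/-- The generator a₁. -/
def a1 : V 1 := (0, true)

/-- ψ_β^{(1)}: adjoin one of the three squares involving only b_{β+1}. -/
def psi1 (β : ℕ) (R : Set (Set (Tup 1 β))) : Set (Set (Set (Tup 1 (β + 1)))) :=
  (fun s => upR R ∪ {s}) ''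
    {square a1 (bn β) (iv a1) (iv (bn β)),
     square a1 (bn β) a1 (iv (bn β)),
     square a1 (bn β) (iv a1) (bn β)}

/-- ψ_β^{(2)}: replace one square [aba'b'] of R by one of the two pairs
{[a b_{β+1} a' b'], [a b a' b_{β+1}⁻¹]} or {[a b_{β+1}⁻¹ a' b'], [a b a' b_{β+1}]}. -/
def psi2 (β : ℕ) (R : Set (Set (Tup 1 β))) : Set (Set (Set (Tup 1 (β + 1)))) :=
  {U | ∃ a b a' b', square a b a' b' ∈ R ∧
    (U = upR (R \ {square a b a' b'}) ∪
        {square a (bn β) a' (up b'), square a (up b) a' (iv (bn β))} ∨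
     U = upR (R \ {square a b a' b'}) ∪
        {square a (iv (bn β)) a' (up b'), square a (up b) a' (bn β)})}

/-- The map ψ_β. -/
def psi (β : ℕ) (R : Set (Set (Tup 1 β))) : Set (Set (Set (Tup 1 (β + 1)))) :=
  psi1 β R ∪ psi2 β R

/-! The new letter b_{β+1} occurs in neither embedded old square, so the two replacement squares
are new and distinct and the count grows by one. The four link edges of the removed square
[aba'b'] are (a⁻¹,b), (a'⁻¹,b'), (a,b'⁻¹), (a',b⁻¹); the two replacement squares split them
between themselves and add the edges (a^{±1}, b_{β+1}) and (a'^{±1}, b_{β+1}⁻¹). Since the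
horizontal alphabet is {a₁, a₁⁻¹} = {a, a⁻¹} = {a', a'⁻¹}, these are all the edges at the new
letter. -/

section Letters

variable {n : ℕ}

@[simp] lemma iv_iv (x : V n) : iv (iv x) = x := by simp [iv]

lemma eq_or_eq_iv_of_V_one (x z : V 1) : x = z ∨ x = iv z := by
  rcases x with ⟨i, s⟩; rcases z with ⟨j, t⟩
  obtain rfl : i = j := Subsingleton.elim i j
  cases s <;> cases t <;> simp [iv]

end Letters

section Squares

variable {α β : ℕ}

lemma square_comm (x x' : V α) (y y' : V β) : square x y x' y' = square x' y' x y := by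
  ext t; simp only [square, mem_insert_iff, mem_singleton_iff]; tauto

lemma up_iv (y : V β) : up (iv y) = iv (up y) := rfl

lemma upT_injective : Function.Injective (upT (α := α) (β := β)) := by
  rintro ⟨x₁, y₁, x₁', y₁'⟩ ⟨x₂, y₂, x₂', y₂'⟩ h
  simp_all [upT, up, Prod.ext_iff]

lemma upSq_injective : Function.Injective (upSq (α := α) (β := β)) :=
  image_injective.mpr upT_injective

lemma upSq_square (x x' : V α) (y y' : V β) :
    upSq (square x y x' y') = square x (up y) x' (up y') := by
  simp [upSq, square, image_insert_eq, upT, up_iv]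

lemma square_notMem_upR {S : Set (Set (Tup α β))} {n : V (β + 1)} (hn : n.1 = Fin.last β)
    (x x' : V α) (y : V (β + 1)) : square x n x' y ∉ upR S := by
  rintro ⟨q, -, hq⟩
  have hmem : (x, n, x', y) ∈ upSq q := hq ▸ by simp [square]
  obtain ⟨t, -, ht⟩ := hmem
  have hlast := congrArg (fun t : Tup α (β + 1) => t.2.1.1) ht
  simp only [upT, up, hn] at hlast
  exact Fin.castSucc_ne_last _ hlast

end Squares

section Link

variable {α β : ℕ}

lemma link_union (S T : Set (Set (Tup α β))) : link (S ∪ T) = link S ∪ link T := by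
  ext e; simp only [link, mem_union, mem_ofPred_eq]; grind

lemma link_singleton (q : Set (Tup α β)) : link {q} = (fun t => (iv t.1, t.2.1)) '' q := by
  ext e; simp [link, eq_comm]

lemma link_singleton_square (x x' : V α) (y y' : V β) :
    link {square x y x' y'} = {(iv x, y), (iv x', y'), (x, iv y'), (x', iv y)} := by
  simp [link_singleton, square, image_insert_eq]

lemma link_upR (S : Set (Set (Tup α β))) : link (upR S) = Prod.map id up '' link S := by
  ext e
  simp only [link, upR, upSq, mem_image, mem_ofPred_eq]
  constructor
  · rintro ⟨_, ⟨q, hq, rfl⟩, _, ⟨t, ht, rfl⟩, rfl⟩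
    exact ⟨_, ⟨q, hq, t, ht, rfl⟩, rfl⟩
  · rintro ⟨_, ⟨q, hq, t, ht, rfl⟩, rfl⟩
    exact ⟨_, ⟨q, hq, rfl⟩, _, ⟨t, ht, rfl⟩, rfl⟩

end Link

section Surgery

variable {α β : ℕ}

lemma square_ne_square_of_last {n : V (β + 1)} (hn : n.1 = Fin.last β) (x x' : V α)
    (y y' : V β) : square x n x' (up y') ≠ square x (up y) x' (iv n) := by
  intro h
  have hmem : (x, n, x', up y') ∈ square x (up y) x' (iv n) := h ▸ by simp [square]
  simp [square, up, iv, Prod.ext_iff, hn] at hmem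

lemma ncard_upR_diff_union_pair {R : Set (Set (Tup α β))} {r : Set (Tup α β)} (hr : r ∈ R)
    {s s' : Set (Tup α (β + 1))} (hss' : s ≠ s') (hs : s ∉ upR (R \ {r}))
    (hs' : s' ∉ upR (R \ {r})) : (upR (R \ {r}) ∪ {s, s'}).ncard = R.ncard + 1 := by
  have hdisj : Disjoint (upR (R \ {r})) {s, s'} := by
    rw [disjoint_right]; rintro _ (rfl | rfl) <;> assumption
  have hpos : 0 < R.ncard := (ncard_pos).2 ⟨r, hr⟩
  rw [ncard_union_eq hdisj, upR, ncard_image_of_injective _ upSq_injective,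
    ncard_sdiff_singleton_of_mem hr, ncard_pair hss']
  omega

lemma link_surgery_eq_univ {R : Set (Set (Tup 1 β))} (hR : link R = univ) {a a' : V 1}
    {b b' : V β} (hr : square a b a' b' ∈ R) {n : V (β + 1)} (hn : n.1 = Fin.last β) :
    link (upR (R \ {square a b a' b'}) ∪ {square a n a' (up b'), square a (up b) a' (iv n)}) =
      univ := by
  have hsplit : link (R \ {square a b a' b'}) ∪ link {square a b a' b'} = univ := by
    rw [← link_union, sdiff_union_of_subset (singleton_subset_iff.2 hr), hR]
  have hcorners : Prod.map id up '' link {square a b a' b'} ⊆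
      link {square a n a' (up b')} ∪ link {square a (up b) a' (iv n)} := by
    simp [link_singleton_square, image_insert_eq, insert_subset_iff, up_iv]
  rw [link_union, link_upR, insert_eq, link_union]
  refine eq_univ_of_forall fun ⟨x, i, s⟩ => ?_
  rcases Fin.eq_castSucc_or_eq_last i with ⟨j, rfl⟩ | rfl
  · have hold : (x, up (j, s)) ∈ Prod.map id up '' univ := ⟨(x, (j, s)), mem_univ _, rfl⟩
    rw [← hsplit, image_union] at hold
    exact union_subset_union_right _ hcorners hold
  · have hnew : (Fin.last β, s) = n ∨ (Fin.last β, s) = iv n := by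
      rcases n with ⟨i', s'⟩
      cases s <;> cases s' <;> simp_all [iv]
    rw [link_singleton_square, link_singleton_square]
    rcases hnew with h | h <;> rw [h]
    · rcases eq_or_eq_iv_of_V_one x a with rfl | rfl <;> simp
    · rcases eq_or_eq_iv_of_V_one x a' with rfl | rfl <;> simp

lemma isBM_surgery {R : Set (Set (Tup 1 β))} (hR : IsBM 1 β R) {a a' : V 1} {b b' : V β}
    (hr : square a b a' b' ∈ R) {n : V (β + 1)} (hn : n.1 = Fin.last β) :
    IsBM 1 (β + 1)
      (upR (R \ {square a b a' b'}) ∪ {square a n a' (up b'), square a (up b) a' (iv n)}) := by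
  obtain ⟨hsq, hcard, hlink⟩ := hR
  have hnew : square a (up b) a' (iv n) ∉ upR (R \ {square a b a' b'}) := by
    rw [square_comm a a' (up b)]; exact square_notMem_upR (n := iv n) hn _ _ _
  refine ⟨?_, ?_, link_surgery_eq_univ hlink hr hn⟩
  · rintro _ (⟨q, hq, rfl⟩ | rfl | rfl)
    · obtain ⟨x, y, x', y', rfl⟩ := hsq q hq.1
      exact ⟨x, up y, x', up y', upSq_square x x' y y'⟩
    all_goals exact ⟨_, _, _, _, rfl⟩
  · rw [ncard_upR_diff_union_pair hr (square_ne_square_of_last hn a a' b b')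
      (square_notMem_upR hn a a' (up b')) hnew, hcard, Nat.one_mul, Nat.one_mul]

end Surgery

/-- Replacing a square [aba'b'] of a (1,β)-BM relation by either of the two pairs
of squares involving the new letter b_{β+1} yields a (1,β+1)-BM relation. -/
theorem surgery_isBM {β : ℕ} (R : Set (Set (Tup 1 β))) (hR : IsBM 1 β R)
    (a a' : V 1) (b b' : V β) (h : square a b a' b' ∈ R) :
    IsBM 1 (β + 1) (upR (R \ {square a b a' b'}) ∪
      {square a (bn β) a' (up b'), square a (up b) a' (iv (bn β))}) ∧
    IsBM 1 (β + 1) (upR (R \ {square a b a' b'}) ∪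
      {square a (iv (bn β)) a' (up b'), square a (up b) a' (bn β)}) :=
  ⟨isBM_surgery hR h rfl, by simpa only [iv_iv] using isBM_surgery hR h (n := iv (bn β)) rfl⟩
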